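/- Let H be a group and N a subgroup of H. Then the amalgamated free product H *_N (N × ℤ) is isomorphic to the HNN extension of H with stable letter t and associated isomorphism the identity on N, i.e., to ⟨H, t | t⁻¹ n t = n for n ∈ N⟩. -/

import Mathlib

/-- The `Bool`-indexed family `{H, N × ℤ}` used to form the amalgamated free product
`H *_N (N × ℤ)` as a pushout. -/
def amalgFam (H : Type*) [Group H] (N : Subgroup H) : Bool → Type _ :=
  fun b => bif b then H else (↥N × Multiplicative ℤ)

instance (H : Type*) [Group H] (N : Subgroup H) : ∀ b, Group (amalgFam H N b)
  | true => inferInstanceAs (Group H)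
  | false => inferInstanceAs (Group (↥N × Multiplicative ℤ))

/-- The inclusions of `N` into `H` and into `N × ℤ` (as `n ↦ (n, 0)`). -/
def amalgMaps (H : Type*) [Group H] (N : Subgroup H) : ∀ b, ↥N →* amalgFam H N b
  | true => N.subtype
  | false => MonoidHom.inl ↥N (Multiplicative ℤ)

/-! The pushout `H *_N (N × ℤ)` is generated by `H` and the generator `τ = (1, 1)` of the `ℤ`
factor, subject to the relations of `H` and to `τ` commuting with `N`; this is the presentation
of the HNN extension with `t ↦ τ`. Conversely `(n, k) ↦ n tᵏ` is a homomorphism `N × ℤ → HNN`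
because `t` commutes with `N`, and together with `H → HNN` it descends to the pushout. The two
maps agree with the identity on generators, hence are mutually inverse. -/

theorem HNNExtension.of_commute_zpow_t {G : Type*} [Group G] (A : Subgroup G) (a : A) (k : ℤ) :
    Commute (of (a : G) : HNNExtension G A A (MulEquiv.refl A)) (t ^ k) := by
  refine Commute.zpow_right ?_ k
  show _ * _ = _ * _
  simpa using of_mul_t (φ := MulEquiv.refl A) a

section

variable {H : Type*} [Group H] (N : Subgroup H)

local notation "P" => Monoid.PushoutI (amalgMaps H N)
local notation "G" => HNNExtension H N N (MulEquiv.refl N)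

open HNNExtension

def amalgOfH : H →* P := Monoid.PushoutI.of (φ := amalgMaps H N) true

def amalgOfProd : N × Multiplicative ℤ →* P := Monoid.PushoutI.of (φ := amalgMaps H N) false

theorem amalg_hom_ext {M : Type*} [Monoid M] {f g : P →* M}
    (hH : f.comp (amalgOfH N) = g.comp (amalgOfH N))
    (hProd : f.comp (amalgOfProd N) = g.comp (amalgOfProd N)) : f = g :=
  Monoid.PushoutI.hom_ext_nonempty fun
    | true => hH
    | false => hProd

theorem amalgOfH_coe_eq_amalgOfProd (n : N) : amalgOfH N n = amalgOfProd N (n, 1) :=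
  (Monoid.PushoutI.of_apply_eq_base (amalgMaps H N) true n).trans
    (Monoid.PushoutI.of_apply_eq_base (amalgMaps H N) false n).symm

def amalgStableLetter : P := amalgOfProd N (1, Multiplicative.ofAdd 1)

theorem commute_amalgStableLetter (n : N) : Commute (amalgStableLetter N) (amalgOfH N n) := by
  rw [amalgOfH_coe_eq_amalgOfProd, amalgStableLetter, Commute, SemiconjBy, ← map_mul, ← map_mul]
  simp

noncomputable def prodToHNN : N × Multiplicative ℤ →* G :=
  (HNNExtension.of.comp N.subtype).noncommCoprod (zpowersHom G t) fun n z =>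
    of_commute_zpow_t N n z.toAdd

theorem prodToHNN_comp_inl :
    (prodToHNN N).comp (MonoidHom.inl _ _) = HNNExtension.of.comp N.subtype :=
  MonoidHom.noncommCoprod_comp_inl ..

noncomputable def amalgToHNNComponent : ∀ b, amalgFam H N b →* G
  | true => HNNExtension.of
  | false => prodToHNN N

noncomputable def amalgToHNN : P →* G :=
  Monoid.PushoutI.lift (amalgToHNNComponent N) (HNNExtension.of.comp N.subtype) fun
    | true => rfl
    | false => prodToHNN_comp_inl N

noncomputable def hnnToAmalg : G →* P :=
  HNNExtension.lift (amalgOfH N) (amalgStableLetter N) (commute_amalgStableLetter N)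

@[simp] theorem amalgToHNN_amalgOfH (h : H) : amalgToHNN N (amalgOfH N h) = HNNExtension.of h :=
  Monoid.PushoutI.lift_of (φ := amalgMaps H N) (i := true) _ _ _ h

@[simp] theorem amalgToHNN_amalgOfProd (p : N × Multiplicative ℤ) :
    amalgToHNN N (amalgOfProd N p) = HNNExtension.of (p.1 : H) * t ^ p.2.toAdd :=
  Monoid.PushoutI.lift_of (φ := amalgMaps H N) (i := false) _ _ _ p

@[simp] theorem hnnToAmalg_of (h : H) : hnnToAmalg N (HNNExtension.of h) = amalgOfH N h :=
  HNNExtension.lift_of ..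

@[simp] theorem hnnToAmalg_t : hnnToAmalg N t = amalgStableLetter N :=
  HNNExtension.lift_t ..

theorem hnnToAmalg_comp_amalgToHNN : (hnnToAmalg N).comp (amalgToHNN N) = MonoidHom.id P := by
  apply amalg_hom_ext
  · ext h
    simp
  · ext ⟨n, z⟩
    simp only [MonoidHom.comp_apply, amalgToHNN_amalgOfProd, map_mul, map_zpow, hnnToAmalg_of,
      hnnToAmalg_t, amalgOfH_coe_eq_amalgOfProd, amalgStableLetter, MonoidHom.id_apply]
    rw [← map_zpow, ← map_mul]
    simp [← ofAdd_zsmul]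

theorem amalgToHNN_comp_hnnToAmalg : (amalgToHNN N).comp (hnnToAmalg N) = MonoidHom.id G := by
  ext
  · simp
  · simp [amalgStableLetter]

end

/-- The amalgamated free product `H *_N (N × ℤ)` is isomorphic to the HNN extension
`⟨H, t | t⁻¹ n t = n, n ∈ N⟩` of `H` with associated isomorphism the identity on `N`. -/
theorem stmt_7 {H : Type*} [Group H] (N : Subgroup H) :
    Nonempty (Monoid.PushoutI (amalgMaps H N) ≃*
      HNNExtension H N N (MulEquiv.refl ↥N)) :=
  ⟨MonoidHom.toMulEquiv _ _ (hnnToAmalg_comp_amalgToHNN N) (amalgToHNN_comp_hnnToAmalg N)⟩
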